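/- Let d ≥ K ≥ 2, n ≥ 1, λ_W > 0, λ_H > 0, and set c := K√(nλ_H λ_W) with c ≤ 1. If (W*, H*) is a global minimizer of f(W,H) := (1/(2Kn))‖WH − Y‖_F² + (λ_W/2)‖W‖_F² + (λ_H/2)‖H‖_F² over W ∈ ℝ^{K×d}, H ∈ ℝ^{d×Kn}, then W*W*ᵀ = (1−c)√(nλ_H/λ_W)·I_K and W*H* = (1−c)·(I_K ⊗ 1_nᵀ). -/

import Mathlib

open Matrix Finset

noncomputable section

/-- Squared Frobenius norm of a real matrix. -/
def frobSq {m n : Type*} [Fintype m] [Fintype n] (A : Matrix m n ℝ) : ℝ :=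
  ∑ i, ∑ j, (A i j) ^ 2

/-!
Put `N = Kn`, `e = 1 - c`, and choose `α, β > 0` with `α² = Nλ_W`, `β² = Kλ_H`, so `αβ = c`.
Completing squares gives, for all `W, H`,
`2N f(W, H) ≥ ‖WH - eY‖² + ‖αWᵀ - β HYᵀ‖² + N(1 - e²)`,
where the only inequality is `‖HYᵀ‖² ≤ n‖H‖²` (Cauchy–Schwarz inside each class; `HYᵀ` holds the
class sums of the features). Since `K ≤ d`, there is `E` with `EEᵀ = I_K`, and suitable multiples
`W = wE`, `H = hEᵀY` attain the bound. So at a global minimizer both squares vanish: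
`WH = eY` and `αWᵀ = β HYᵀ`, whence `α WWᵀ = β WHYᵀ = βe YYᵀ = βen I_K`.
-/

section Frobenius

variable {m n p : Type*} [Fintype m] [Fintype n] [Fintype p]

lemma frobSq_nonneg (A : Matrix m n ℝ) : 0 ≤ frobSq A :=
  sum_nonneg fun _ _ => sum_nonneg fun _ _ => sq_nonneg _

lemma frobSq_eq_zero_iff {A : Matrix m n ℝ} : frobSq A = 0 ↔ A = 0 := by
  refine ⟨fun h => ?_, fun h => by simp [h, frobSq]⟩
  ext i j
  have hi := (sum_eq_zero_iff_of_nonneg fun i _ => sum_nonneg fun j _ => sq_nonneg (A i j)).1 h i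
    (mem_univ i)
  exact (pow_eq_zero_iff two_ne_zero).1
    ((sum_eq_zero_iff_of_nonneg fun j _ => sq_nonneg (A i j)).1 hi j (mem_univ j))

lemma frobSq_eq_trace (A : Matrix m n ℝ) : frobSq A = trace (A * Aᵀ) := by
  simp [frobSq, trace, mul_apply, sq]

lemma frobSq_transpose (A : Matrix m n ℝ) : frobSq Aᵀ = frobSq A := by
  rw [frobSq_eq_trace, frobSq_eq_trace, transpose_transpose, trace_mul_comm]

lemma frobSq_smul (r : ℝ) (A : Matrix m n ℝ) : frobSq (r • A) = r ^ 2 * frobSq A := by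
  simp [frobSq, mul_sum, mul_pow]

lemma frobSq_sub (A B : Matrix m n ℝ) :
    frobSq (A - B) = frobSq A - 2 * trace (A * Bᵀ) + frobSq B := by
  have hBA : trace (B * Aᵀ) = trace (A * Bᵀ) := by
    rw [← trace_transpose, transpose_mul, transpose_transpose]
  simp only [frobSq_eq_trace, transpose_sub, Matrix.sub_mul, Matrix.mul_sub, trace_sub, hBA]
  ring

lemma frobSq_transpose_mul [DecidableEq m] {E : Matrix m n ℝ} (hE : E * Eᵀ = 1)
    (A : Matrix m p ℝ) : frobSq (Eᵀ * A) = frobSq A := by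
  rw [frobSq_eq_trace, frobSq_eq_trace, transpose_mul, transpose_transpose, Matrix.mul_assoc,
    trace_mul_comm]
  simp only [Matrix.mul_assoc, hE, Matrix.mul_one]

end Frobenius

lemma exists_mul_transpose_eq_one {m n : Type*} [Fintype n] [DecidableEq m] [DecidableEq n]
    (f : m ↪ n) : ∃ E : Matrix m n ℝ, E * Eᵀ = 1 :=
  ⟨(1 : Matrix n n ℝ).submatrix f id, by
    rw [transpose_submatrix, transpose_one, ← submatrix_mul _ _ _ _ _ Function.bijective_id,
      Matrix.mul_one, submatrix_one_embedding]⟩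

section OneHot

variable (κ ι : Type*) [Fintype κ] [Fintype ι] [DecidableEq κ]

def oneHot : Matrix κ (κ × ι) ℝ := fun k p => if p.1 = k then 1 else 0

lemma oneHot_mul_transpose : oneHot κ ι * (oneHot κ ι)ᵀ = (Fintype.card ι : ℝ) • 1 := by
  ext k l
  by_cases hkl : k = l <;> simp [oneHot, mul_apply, Fintype.sum_prod_type, one_apply, hkl, eq_comm]

lemma frobSq_oneHot : frobSq (oneHot κ ι) = Fintype.card κ * Fintype.card ι := by
  rw [frobSq_eq_trace, oneHot_mul_transpose, trace_smul, trace_one, smul_eq_mul, mul_comm]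

variable {κ ι}

lemma frobSq_mul_oneHot_transpose_le {δ : Type*} [Fintype δ] (H : Matrix δ (κ × ι) ℝ) :
    frobSq (H * (oneHot κ ι)ᵀ) ≤ Fintype.card ι * frobSq H := by
  have hrow : ∀ r k, (H * (oneHot κ ι)ᵀ) r k = ∑ j, H r (k, j) := fun r k => by
    simp only [oneHot, mul_apply, transpose_apply, Fintype.sum_prod_type, mul_ite, mul_one,
      mul_zero]
    rw [Fintype.sum_eq_single k fun x hx => by simp [hx]]
    simp
  simp only [frobSq, hrow, Fintype.sum_prod_type, mul_sum]
  gcongr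
  rw [← mul_sum]
  simpa using sq_sum_le_card_mul_sum_sq (s := univ) (f := fun j => H _ (_, j))

end OneHot

section UFM

variable {κ ι δ : Type*} [Fintype κ] [Fintype ι] [Fintype δ] [DecidableEq κ]

/-- `2Kn` times the objective of the theorem when `α² = Kn λ_W` and `β² = K λ_H`, so that
`αβ = K √(n λ_H λ_W)`. -/
def ufmLoss (α β : ℝ) (W : Matrix κ δ ℝ) (H : Matrix δ (κ × ι) ℝ) : ℝ :=
  frobSq (W * H - oneHot κ ι) + α ^ 2 * frobSq W + Fintype.card ι * β ^ 2 * frobSq H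

lemma le_ufmLoss (α β : ℝ) (W : Matrix κ δ ℝ) (H : Matrix δ (κ × ι) ℝ) :
    frobSq (W * H - (1 - α * β) • oneHot κ ι) + frobSq (α • Wᵀ - β • (H * (oneHot κ ι)ᵀ))
      + (1 - (1 - α * β) ^ 2) * frobSq (oneHot κ ι) ≤ ufmLoss α β W H := by
  set Y := oneHot κ ι
  have hcross : trace (Wᵀ * (H * Yᵀ)ᵀ) = trace (W * H * Yᵀ) := by
    rw [← trace_transpose, transpose_mul, transpose_transpose, transpose_transpose, trace_mul_cycle]
  have hH := mul_le_mul_of_nonneg_left (frobSq_mul_oneHot_transpose_le H) (sq_nonneg β)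
  simp only [ufmLoss, frobSq_sub, frobSq_smul, frobSq_transpose, transpose_smul, Matrix.mul_smul,
    Matrix.smul_mul, trace_smul, smul_eq_mul, hcross] at hH ⊢
  linarith

lemma exists_ufmLoss_eq [DecidableEq δ] [Nonempty ι] (f : κ ↪ δ) {α β : ℝ} (hα : 0 < α)
    (hβ : 0 < β) (hαβ : α * β ≤ 1) :
    ∃ (W : Matrix κ δ ℝ) (H : Matrix δ (κ × ι) ℝ), ufmLoss α β W H =
      (1 - (1 - α * β) ^ 2) * frobSq (oneHot κ ι) := by
  obtain ⟨E, hE⟩ := exists_mul_transpose_eq_one (m := κ) f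
  set Y := oneHot κ ι
  set e := 1 - α * β
  set n : ℝ := (Fintype.card ι : ℝ)
  have he : 0 ≤ e := sub_nonneg.2 hαβ
  have hn : 0 < n := Nat.cast_pos.2 Fintype.card_pos
  set ρ := β * n / α with hρ_def
  have hρ : 0 < ρ := by positivity
  set w := √(e * ρ)
  set h := √(e / ρ)
  have hw : w ^ 2 = e * ρ := Real.sq_sqrt (by positivity)
  have hh : h ^ 2 = e / ρ := Real.sq_sqrt (by positivity)
  have hwh : w * h = e := by
    rw [← Real.sqrt_mul (by positivity), show e * ρ * (e / ρ) = e * e by field_simp,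
      Real.sqrt_mul_self he]
  refine ⟨w • E, h • (Eᵀ * Y), ?_⟩
  have hWH : w • E * h • (Eᵀ * Y) - Y = (-(α * β)) • Y := by
    rw [Matrix.smul_mul, Matrix.mul_smul, smul_smul, ← Matrix.mul_assoc, hE, Matrix.one_mul, hwh]
    module
  have hE2 : frobSq E = Fintype.card κ := by rw [frobSq_eq_trace, hE, trace_one]
  rw [ufmLoss, hWH, frobSq_smul, frobSq_smul, frobSq_smul, frobSq_transpose_mul hE, hE2, hw, hh,
    frobSq_oneHot, hρ_def]
  field_simp
  ring

theorem ufmLoss_minimizer_eq [DecidableEq δ] [Nonempty ι] (f : κ ↪ δ) {α β : ℝ} (hα : 0 < α)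
    (hβ : 0 < β) (hαβ : α * β ≤ 1) {W : Matrix κ δ ℝ} {H : Matrix δ (κ × ι) ℝ}
    (hmin : ∀ (W' : Matrix κ δ ℝ) (H' : Matrix δ (κ × ι) ℝ), ufmLoss α β W H ≤ ufmLoss α β W' H') :
    W * Wᵀ = ((1 - α * β) * (β * Fintype.card ι / α)) • (1 : Matrix κ κ ℝ) ∧
      W * H = (1 - α * β) • oneHot κ ι := by
  obtain ⟨W₀, H₀, hW₀H₀⟩ := exists_ufmLoss_eq (ι := ι) f hα hβ hαβ
  have hle := (le_ufmLoss α β W H).trans ((hmin W₀ H₀).trans hW₀H₀.le)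
  have hsum : frobSq (W * H - (1 - α * β) • oneHot κ ι)
      + frobSq (α • Wᵀ - β • (H * (oneHot κ ι)ᵀ)) = 0 :=
    le_antisymm (by linarith) (add_nonneg (frobSq_nonneg _) (frobSq_nonneg _))
  obtain ⟨hfit, halign⟩ := (add_eq_zero_iff_of_nonneg (frobSq_nonneg _) (frobSq_nonneg _)).1 hsum
  rw [frobSq_eq_zero_iff, sub_eq_zero] at hfit halign
  refine ⟨?_, hfit⟩
  calc W * Wᵀ = α⁻¹ • (W * (α • Wᵀ)) := by rw [Matrix.mul_smul, inv_smul_smul₀ hα.ne']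
    _ = α⁻¹ • β • (W * H * (oneHot κ ι)ᵀ) := by rw [halign, Matrix.mul_smul, Matrix.mul_assoc]
    _ = _ := by
      rw [hfit, Matrix.smul_mul, oneHot_mul_transpose, smul_smul, smul_smul, smul_smul]
      congr 1
      field_simp

end UFM

/-- Consequence of Theorem 1 (bias-free UFM with regularized MSE loss):
for `c := K√(nλ_H λ_W) ≤ 1`, any global minimizer `(W*, H*)` satisfies
`W*W*ᵀ = (1−c)√(nλ_H/λ_W)·I_K` and `W*H* = (1−c)·(I_K ⊗ 1_nᵀ)`. -/
theorem ufm_mse_biasFree_WWt_WH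
    (K d n : ℕ) (hK : 2 ≤ K) (hd : K ≤ d) (hn : 1 ≤ n)
    (lW lH : ℝ) (hlW : 0 < lW) (hlH : 0 < lH)
    (c : ℝ) (hc : c = (K : ℝ) * Real.sqrt ((n : ℝ) * lH * lW)) (hc1 : c ≤ 1)
    (Y : Matrix (Fin K) (Fin K × Fin n) ℝ)
    (hY : ∀ k p, Y k p = if p.1 = k then 1 else 0)
    (f : Matrix (Fin K) (Fin d) ℝ → Matrix (Fin d) (Fin K × Fin n) ℝ → ℝ)
    (hf : ∀ W H, f W H =
      1 / (2 * (K : ℝ) * (n : ℝ)) * frobSq (W * H - Y)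
        + lW / 2 * frobSq W + lH / 2 * frobSq H)
    (Ws : Matrix (Fin K) (Fin d) ℝ) (Hs : Matrix (Fin d) (Fin K × Fin n) ℝ)
    (hmin : ∀ W H, f Ws Hs ≤ f W H) :
    Ws * Wsᵀ = ((1 - c) * Real.sqrt ((n : ℝ) * lH / lW)) • (1 : Matrix (Fin K) (Fin K) ℝ) ∧
    Ws * Hs = (1 - c) • Y := by
  have : Nonempty (Fin n) := ⟨⟨0, hn⟩⟩
  have hc2 : c ^ 2 = K ^ 2 * (n * lH * lW) := by rw [hc, mul_pow, Real.sq_sqrt (by positivity)]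
  have hc0 : 0 < c := by rw [hc]; positivity
  set α := √(K * n * lW)
  have hα : 0 < α := by positivity
  have hα2 : α ^ 2 = K * n * lW := Real.sq_sqrt (by positivity)
  set β := c / α
  have hαβ : α * β = c := mul_div_cancel₀ c hα.ne'
  have hYoh : Y = oneHot (Fin K) (Fin n) := by ext k p; exact hY k p
  have hloss : ∀ W H, f W H = ufmLoss α β W H / (2 * K * n) := fun W H => by
    rw [hf, ufmLoss, hYoh, Fintype.card_fin, div_pow, hα2, hc2]
    field_simp
  have hmin' : ∀ W H, ufmLoss α β Ws Hs ≤ ufmLoss α β W H := fun W H => by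
    have := hmin W H
    rwa [hloss, hloss, div_le_div_iff_of_pos_right (by positivity)] at this
  have hscale : β * n / α = √(n * lH / lW) := by
    rw [eq_comm, Real.sqrt_eq_iff_eq_sq (by positivity) (by positivity), div_pow, mul_pow, div_pow,
      hc2, hα2]
    field_simp
  obtain ⟨hWW, hWH⟩ := ufmLoss_minimizer_eq (Fin.castLEEmb hd) hα (by positivity) (hαβ.le.trans hc1)
    hmin'
  rw [hαβ, Fintype.card_fin, hscale] at hWW
  rw [hαβ, ← hYoh] at hWH
  exact ⟨hWW, hWH⟩
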